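/- The frequency of the letter a in the infinite Fibonacci word exists and equals φ−1 = 1/φ, and the frequency of b equals 2−φ, where φ = (1+√5)/2. Equivalently, the number of a's among the first N letters, divided by N, tends to 1/φ as N → ∞. -/

import Mathlib

/-- The two-letter alphabet: `A` and `B`. -/
inductive Letter : Type
  | A : Letter
  | B : Letter
  deriving DecidableEq, Repr

open Letter

/-- The Fibonacci substitution θ : a → ab, b → a. -/
def theta : Letter → List Letter
  | A => [A, B]
  | B => [A]

/-- Extension of the substitution to words, by concatenation. -/
def substWord (w : List Letter) : List Letter := w.flatMap theta

/-- The n-th finite Fibonacci word F_n = θ^n(a). -/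
def FibWord (n : ℕ) : List Letter := substWord^[n] [A]

/-- The infinite Fibonacci word (each F_n is a prefix of all later ones,
and `FibWord (k+1)` has length `fib (k+3) ≥ k+1`, so index `k` is defined). -/
def FibSeq (k : ℕ) : Letter := (FibWord (k + 1)).getD k A

open Filter

noncomputable def goldenRatio' : ℝ := (1 + Real.sqrt 5) / 2

/-! Since `FibWord (n + 2) = FibWord (n + 1) ++ FibWord n`, the word `FibWord n` has length
`fib (n + 2)` and contains `fib (n + 1)` letters `a`. A prefix of `FibWord (m + 2)` of length
`N ≥ fib (m + 3)` is `FibWord (m + 1)` followed by a prefix of `FibWord m`, so along this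
Zeckendorf-type recursion the discrepancy `#a - N / φ` changes by
`fib (m + 2) - fib (m + 3) / φ = ψ ^ (m + 3)`. Summing the geometric series bounds the discrepancy
by `φ ^ 2`, hence `#a / N → 1 / φ`; the letters `b` make up the rest. -/

open Nat (fib)
open scoped goldenRatio

lemma tendsto_div_of_abs_sub_mul_le {f : ℕ → ℝ} {α C : ℝ} (h : ∀ N, |f N - α * N| ≤ C) :
    Tendsto (fun N ↦ f N / N) atTop (nhds α) := by
  have hdiff : Tendsto (fun N : ℕ ↦ f N / N - α) atTop (nhds 0) := by
    refine squeeze_zero_norm' ?_ (tendsto_const_div_atTop_nhds_zero_nat C)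
    filter_upwards [eventually_gt_atTop 0] with N hN
    have hN' : (0 : ℝ) < N := Nat.cast_pos.2 hN
    calc ‖f N / N - α‖ = |f N - α * N| / N := by
          rw [Real.norm_eq_abs, div_sub' hN'.ne', abs_div, abs_of_pos hN', mul_comm]
      _ ≤ C / N := by gcongr; exact h N
  simpa using hdiff.add_const α

lemma card_filter_range_eq_count_take {α : Type*} [DecidableEq α] (s : ℕ → α) (w : List α)
    (c : α) {N : ℕ} (hN : N ≤ w.length) (hs : ∀ k (hk : k < w.length), s k = w[k]) :
    ((Finset.range N).filter fun k => s k = c).card = (w.take N).count c := by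
  induction N with
  | zero => simp
  | succ N ih =>
    rw [Finset.range_add_one, Finset.filter_insert, List.take_add_one,
      List.getElem?_eq_getElem hN, List.count_append, ← ih (by omega), ← hs N hN]
    split_ifs with h <;> simp [h, Finset.card_insert_of_notMem]

lemma substWord_append (u v : List Letter) :
    substWord (u ++ v) = substWord u ++ substWord v :=
  List.flatMap_append

lemma FibWord_succ (n : ℕ) : FibWord (n + 1) = substWord (FibWord n) :=
  Function.iterate_succ_apply' _ _ _

lemma FibWord_add_two (n : ℕ) : FibWord (n + 2) = FibWord (n + 1) ++ FibWord n := by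
  induction n with
  | zero => decide
  | succ n ih =>
    rw [FibWord_succ (n + 2), ih, substWord_append, ← FibWord_succ, ← FibWord_succ]
    exact congrArg (· ++ _) ih

lemma length_FibWord (n : ℕ) : (FibWord n).length = fib (n + 2) := by
  induction n using Nat.twoStepInduction with
  | zero => decide
  | one => decide
  | more n ih₀ ih₁ =>
    rw [FibWord_add_two, List.length_append, ih₀, ih₁, Nat.fib_add_two (n := n + 2), add_comm]

lemma count_A_FibWord (n : ℕ) : (FibWord n).count A = fib (n + 1) := by
  induction n using Nat.twoStepInduction with
  | zero => decide
  | one => decide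
  | more n ih₀ ih₁ =>
    rw [FibWord_add_two, List.count_append, ih₀, ih₁, Nat.fib_add_two (n := n + 1), add_comm]

lemma FibWord_prefix_of_le {m n : ℕ} (h : m ≤ n) : FibWord m <+: FibWord n := by
  induction n, h using Nat.le_induction with
  | base => exact List.prefix_refl _
  | succ n hmn ih =>
    refine ih.trans ?_
    cases n with
    | zero => decide
    | succ n => exact FibWord_add_two n ▸ List.prefix_append _ _

lemma FibSeq_eq_getElem {k n : ℕ} (hk : k < (FibWord n).length) : FibSeq k = (FibWord n)[k] := by
  have hk' : k < (FibWord (k + 1)).length := by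
    rw [length_FibWord]; exact Nat.fib_add_two_strictMono.id_le (k + 1)
  rw [FibSeq, List.getD_eq_getElem _ _ hk']
  rcases le_total (k + 1) n with h | h
  · exact (FibWord_prefix_of_le h).getElem hk'
  · exact ((FibWord_prefix_of_le h).getElem hk).symm

def letterCount (c : Letter) (N : ℕ) : ℕ := ((Finset.range N).filter fun k => FibSeq k = c).card

lemma letterCount_eq_count_take (c : Letter) {N n : ℕ} (h : N ≤ fib (n + 2)) :
    letterCount c N = ((FibWord n).take N).count c :=
  card_filter_range_eq_count_take _ _ c (by rwa [length_FibWord]) fun _ ↦ FibSeq_eq_getElem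

lemma letterCount_A_add_letterCount_B (N : ℕ) : letterCount A N + letterCount B N = N := by
  unfold letterCount
  have h := Finset.card_filter_add_card_filter_not (s := Finset.range N) (fun k ↦ FibSeq k = A)
  have not_A_iff_B : ∀ k, ¬FibSeq k = A ↔ FibSeq k = B := fun k ↦ by cases FibSeq k <;> simp
  simpa only [not_A_iff_B, Finset.card_range] using h

lemma letterCount_A_of_fib_le {m N : ℕ} (h₁ : fib (m + 3) ≤ N) (h₂ : N ≤ fib (m + 4)) :
    letterCount A N = fib (m + 2) + letterCount A (N - fib (m + 3)) := by
  have hfib : fib (m + 4) = fib (m + 2) + fib (m + 3) := Nat.fib_add_two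
  rw [letterCount_eq_count_take A (n := m + 2) h₂, FibWord_add_two, List.take_append,
    length_FibWord, List.take_of_length_le (by rwa [length_FibWord]), List.count_append,
    count_A_FibWord, letterCount_eq_count_take A (n := m) (by omega)]

lemma fib_sub_inv_goldenRatio_mul_fib (n : ℕ) :
    (fib n : ℝ) - φ⁻¹ * fib (n + 1) = ψ ^ (n + 1) := by
  rw [Real.inv_goldenRatio, ← Real.goldenConj_mul_fib_succ_add_fib]
  ring

lemma abs_goldenConj : |ψ| = φ⁻¹ := by
  rw [Real.inv_goldenRatio, abs_of_neg Real.goldenConj_neg]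

lemma inv_goldenRatio_lt_one : φ⁻¹ < 1 := inv_lt_one_of_one_lt₀ Real.one_lt_goldenRatio

lemma abs_letterCount_A_sub_le_geom_sum {m N : ℕ} (hN : N < fib (m + 2)) :
    |(letterCount A N : ℝ) - φ⁻¹ * N| ≤ ∑ j ∈ Finset.range m, φ⁻¹ ^ j := by
  induction m using Nat.twoStepInduction generalizing N with
  | zero =>
    obtain rfl : N = 0 := by simpa using hN
    simp [letterCount]
  | one =>
    have hN : N < 2 := hN
    interval_cases N
    · simp [letterCount]
    · have h₁ : letterCount A 1 = 1 := by decide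
      have h₀ : 0 < φ⁻¹ := by positivity
      rw [h₁, Nat.cast_one, mul_one, Finset.sum_range_one, pow_zero, abs_le]
      constructor <;> linarith [inv_goldenRatio_lt_one]
  | more m ih₀ ih₁ =>
    replace hN : N < fib (m + 4) := hN
    rcases lt_or_ge N (fib (m + 3)) with h | h
    · refine (ih₁ h).trans (Finset.sum_le_sum_of_subset_of_nonneg ?_ fun _ _ _ ↦ by positivity)
      exact Finset.range_subset_range.2 (by omega)
    set r := N - fib (m + 3) with hr
    have hfib : fib (m + 4) = fib (m + 2) + fib (m + 3) := Nat.fib_add_two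
    have hrN : r < fib (m + 2) := by omega
    have key : (letterCount A N : ℝ) - φ⁻¹ * N =
        ψ ^ (m + 3) + ((letterCount A r : ℝ) - φ⁻¹ * r) := by
      rw [letterCount_A_of_fib_le h hN.le, ← fib_sub_inv_goldenRatio_mul_fib, hr, Nat.cast_sub h]
      push_cast
      ring
    have hpow : φ⁻¹ ^ (m + 3) ≤ φ⁻¹ ^ m :=
      pow_le_pow_of_le_one (by positivity) inv_goldenRatio_lt_one.le (by omega)
    calc |(letterCount A N : ℝ) - φ⁻¹ * N|
        ≤ |ψ ^ (m + 3)| + |(letterCount A r : ℝ) - φ⁻¹ * r| := key ▸ abs_add_le _ _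
      _ ≤ φ⁻¹ ^ m + ∑ j ∈ Finset.range m, φ⁻¹ ^ j := by
        rw [abs_pow, abs_goldenConj]; gcongr; exact ih₀ hrN
      _ ≤ ∑ j ∈ Finset.range (m + 2), φ⁻¹ ^ j := by
        rw [Finset.sum_range_succ, Finset.sum_range_succ]
        linarith [pow_pos (inv_pos.2 Real.goldenRatio_pos) (m + 1)]

lemma abs_letterCount_A_sub_le (N : ℕ) : |(letterCount A N : ℝ) - φ⁻¹ * N| ≤ φ ^ 2 := by
  have hN : N < fib (N + 1 + 2) := Nat.fib_add_two_strictMono.id_le (N + 1)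
  calc |(letterCount A N : ℝ) - φ⁻¹ * N| ≤ ∑ j ∈ Finset.Ico 0 (N + 1), φ⁻¹ ^ j := by
        rw [← Finset.range_eq_Ico]; exact abs_letterCount_A_sub_le_geom_sum hN
    _ ≤ φ⁻¹ ^ 0 / (1 - φ⁻¹) := geom_sum_Ico_le_of_lt_one (by positivity) inv_goldenRatio_lt_one
    _ = φ ^ 2 := by
      rw [pow_zero, Real.inv_goldenRatio, sub_neg_eq_add, add_comm, ← Real.goldenConj_sq, one_div,
        ← inv_pow, Real.inv_goldenConj, neg_sq]

lemma abs_letterCount_B_sub_le (N : ℕ) : |(letterCount B N : ℝ) - (1 - φ⁻¹) * N| ≤ φ ^ 2 := by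
  have hsum : (letterCount A N : ℝ) + letterCount B N = N := by
    exact_mod_cast letterCount_A_add_letterCount_B N
  have hneg : (letterCount B N : ℝ) - (1 - φ⁻¹) * N = -((letterCount A N : ℝ) - φ⁻¹ * N) := by
    linear_combination hsum
  rw [hneg, abs_neg]
  exact abs_letterCount_A_sub_le N

/-- The letter frequencies in the infinite Fibonacci word: the frequency of `a`
exists and equals 1/φ = φ − 1, and the frequency of `b` equals 2 − φ. -/
theorem fib_word_letter_frequencies :
    Tendsto (fun N : ℕ =>
        (((Finset.range N).filter fun k => FibSeq k = A).card : ℝ) / N)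
      atTop (nhds (1 / goldenRatio')) ∧
    Tendsto (fun N : ℕ =>
        (((Finset.range N).filter fun k => FibSeq k = B).card : ℝ) / N)
      atTop (nhds (2 - goldenRatio')) := by
  have hA : 1 / goldenRatio' = φ⁻¹ := one_div _
  have hB : 2 - goldenRatio' = 1 - φ⁻¹ := by
    change 2 - φ = _
    rw [Real.inv_goldenRatio, ← Real.one_sub_goldenConj]
    ring
  exact ⟨hA ▸ tendsto_div_of_abs_sub_mul_le abs_letterCount_A_sub_le,
    hB ▸ tendsto_div_of_abs_sub_mul_le abs_letterCount_B_sub_le⟩
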